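/- The array B constructed from an s-subset indexing (with a_s copies, 1 ≤ s ≤ t−1) is a valid [t, F', Z', S]-PDA with F' = Σ_{s=1}^{t−1} a_s·binom(t,s), Z' = Σ_{s=1}^{t−1} a_s·binom(t−1,s−1), and S = Σ_{s=1}^{t−1} a_s·binom(t,s+1). -/

import Mathlib

/-- Rows of the array `B` from the `t`-design based construction: pairs `(Y,i)` with
`Y ⊆ [t]`, `1 ≤ |Y| ≤ t−1` and `i ∈ [a_{|Y|}]`. -/
def HpRow (t : ℕ) (a : ℕ → ℕ) : Type :=
  Σ Y : {Y : Finset (Fin t) // 1 ≤ Y.card ∧ Y.card ≤ t - 1}, Fin (a Y.1.card)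

instance (t : ℕ) (a : ℕ → ℕ) : Fintype (HpRow t a) := by
  unfold HpRow; infer_instance

/-- The entry of `B` at row `(Y,i)` and column `j`: a star if `j ∈ Y`,
otherwise the symbol `(Y ∪ {j}, i)`. -/
def HpEntry (t : ℕ) (a : ℕ → ℕ) (r : HpRow t a) (j : Fin t) :
    Option (Finset (Fin t) × ℕ) :=
  if j ∈ r.1.1 then none else some (insert j r.1.1, (r.2 : ℕ))

/-!
Rows are counted by the size `s` of their set `Y`: there are `C(t,s)` such sets, and
`C(t-1,s-1)` of them contain a given column `j`. The symbols occurring in `B` are exactly the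
pairs `(X,i)` with `2 ≤ |X| ≤ t` and `i < a_{|X|-1}`, since `X = Y ∪ {j}` can be split back at
any `j ∈ X`. Finally, if `(Y₁ ∪ {j₁}, i) = (Y₂ ∪ {j₂}, i)` at two different cells, then
`j₁ ≠ j₂` (otherwise `Y₁ = Y₂`), so `j₂ ∈ Y₁` and `j₁ ∈ Y₂`: these are the two crossing stars,
and they also force the rows apart because `j₁ ∉ Y₁`.
-/

open Finset

section FinsetCounting

variable {α : Type*} [Fintype α]

theorem card_filter_card_eq_and_mem [DecidableEq α] (x : α) {s : ℕ} (hs : s ≠ 0) :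
    #{Y : Finset α | #Y = s ∧ x ∈ Y} = (Fintype.card α - 1).choose (s - 1) := by
  rw [← card_univ, ← card_erase_of_mem (mem_univ x), ← card_powersetCard]
  refine card_nbij' (·.erase x) (insert x) ?_ ?_ ?_ ?_
  · intro Y hY
    simp only [mem_coe, mem_filter, mem_univ, true_and] at hY
    simp [mem_powersetCard, card_erase_of_mem hY.2, hY.1, erase_subset_erase]
  · intro Z hZ
    simp only [mem_coe, mem_powersetCard] at hZ
    have hx : x ∉ Z := fun h => (mem_erase.mp (hZ.1 h)).1 rfl
    simp [card_insert_of_notMem hx, hZ.2, Nat.sub_add_cancel (Nat.pos_of_ne_zero hs)]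
  · intro Y hY
    simp only [mem_coe, mem_filter, mem_univ, true_and] at hY
    exact insert_erase hY.2
  · intro Z hZ
    simp only [mem_coe, mem_powersetCard] at hZ
    exact erase_insert fun h => (mem_erase.mp (hZ.1 h)).1 rfl

theorem sum_filter_card_mem_and {M : Type*} [AddCommMonoid M] (S : Finset ℕ)
    (p : Finset α → Prop) [DecidablePred p] (g : ℕ → M) :
    ∑ Y : Finset α with #Y ∈ S ∧ p Y, g #Y = ∑ s ∈ S, #{Y : Finset α | #Y = s ∧ p Y} • g s := by
  rw [← sum_fiberwise_of_maps_to (g := card) (t := S) fun Y hY => (mem_filter.mp hY).2.1]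
  refine sum_congr rfl fun s hs => ?_
  rw [filter_filter, ← sum_const]
  refine sum_congr (filter_congr fun Y _ => ?_) fun Y hY => by rw [(mem_filter.mp hY).2.1]
  constructor
  · rintro ⟨⟨-, hp⟩, rfl⟩; exact ⟨rfl, hp⟩
  · rintro ⟨rfl, hp⟩; exact ⟨⟨hs, hp⟩, rfl⟩

theorem sum_filter_card_mem {M : Type*} [AddCommMonoid M] (S : Finset ℕ) (g : ℕ → M) :
    ∑ Y : Finset α with #Y ∈ S, g #Y = ∑ s ∈ S, (Fintype.card α).choose s • g s := by
  simpa using sum_filter_card_mem_and S (fun _ => True) g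

theorem sum_filter_card_mem_and_mem [DecidableEq α] {M : Type*} [AddCommMonoid M]
    {S : Finset ℕ} (hS : 0 ∉ S) (x : α) (g : ℕ → M) :
    ∑ Y : Finset α with #Y ∈ S ∧ x ∈ Y, g #Y
      = ∑ s ∈ S, (Fintype.card α - 1).choose (s - 1) • g s := by
  rw [sum_filter_card_mem_and]
  exact sum_congr rfl fun s hs => by
    rw [card_filter_card_eq_and_mem x (ne_of_mem_of_not_mem hs hS)]

end FinsetCounting

theorem Finset.card_filter_sigma_fst {ι : Type*} {β : ι → Type*} [Fintype ι]
    [∀ i, Fintype (β i)] (p : ι → Prop) [DecidablePred p] :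
    #{x : Σ i, β i | p x.1} = ∑ i with p i, Fintype.card (β i) := by
  rw [show ({x : Σ i, β i | p x.1} : Finset _) = ({i | p i} : Finset ι).sigma fun _ => univ by
    ext; simp, card_sigma]
  rfl

section Rows

variable {t : ℕ} {a : ℕ → ℕ}

theorem hpEntry_eq_none_iff {r : HpRow t a} {j : Fin t} :
    HpEntry t a r j = none ↔ j ∈ r.1.1 := by
  unfold HpEntry; split_ifs with h <;> simp [h]

theorem hpEntry_eq_some_iff {r : HpRow t a} {j : Fin t} {x : Finset (Fin t) × ℕ} :
    HpEntry t a r j = some x ↔ j ∉ r.1.1 ∧ insert j r.1.1 = x.1 ∧ (r.2 : ℕ) = x.2 := by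
  unfold HpEntry; split_ifs with h <;> simp [h, Prod.ext_iff]

variable (t a)

theorem card_filter_hpRow (p : Finset (Fin t) → Prop) [DecidablePred p] :
    #{r : HpRow t a | p r.1.1} = ∑ Y : Finset (Fin t) with #Y ∈ Icc 1 (t - 1) ∧ p Y, a #Y :=
  calc #{r : HpRow t a | p r.1.1}
      = ∑ Y : {Y : Finset (Fin t) // 1 ≤ #Y ∧ #Y ≤ t - 1} with p Y.1,
          Fintype.card (Fin (a #Y.1)) :=
        card_filter_sigma_fst fun Y : {Y : Finset (Fin t) // 1 ≤ #Y ∧ #Y ≤ t - 1} => p Y.1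
    _ = ∑ Y : {Y : Finset (Fin t) // 1 ≤ #Y ∧ #Y ≤ t - 1}, if p Y.1 then a #Y.1 else 0 := by
        simp only [Fintype.card_fin, sum_filter]
    _ = ∑ Y : Finset (Fin t) with #Y ∈ Icc 1 (t - 1), if p Y then a #Y else 0 :=
        (sum_subtype _ (fun Y => by simp) fun Y => if p Y then a #Y else 0).symm
    _ = _ := by rw [← sum_filter, filter_filter]

theorem card_hpRow : Fintype.card (HpRow t a) = ∑ s ∈ Icc 1 (t - 1), a s * t.choose s := by
  rw [← card_univ, ← filter_true univ, card_filter_hpRow t a fun _ => True]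
  simpa [mul_comm] using sum_filter_card_mem (α := Fin t) (Icc 1 (t - 1)) a

theorem card_filter_hpEntry_eq_none (j : Fin t) :
    #{r : HpRow t a | HpEntry t a r j = none}
      = ∑ s ∈ Icc 1 (t - 1), a s * (t - 1).choose (s - 1) := by
  simp only [hpEntry_eq_none_iff]
  rw [card_filter_hpRow t a (j ∈ ·), sum_filter_card_mem_and_mem (by simp) j a]
  simp [mul_comm]

end Rows

section Symbols

variable (t : ℕ) (a : ℕ → ℕ)

def hpSymbols : Finset (Finset (Fin t) × ℕ) :=
  (({X | #X ∈ Icc 2 t} : Finset (Finset (Fin t))).sigma fun X => range (a (#X - 1))).map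
    (Equiv.sigmaEquivProd _ _).toEmbedding

variable {t a}

theorem mem_hpSymbols {x : Finset (Fin t) × ℕ} :
    x ∈ hpSymbols t a ↔ #x.1 ∈ Icc 2 t ∧ x.2 < a (#x.1 - 1) := by
  obtain ⟨X, i⟩ := x
  simp [hpSymbols]

variable (t a)

theorem card_hpSymbols : #(hpSymbols t a) = ∑ s ∈ Icc 1 (t - 1), a s * t.choose (s + 1) := by
  rw [hpSymbols, card_map, card_sigma]
  simp only [card_range]
  rw [sum_filter_card_mem (Icc 2 t) fun s => a (s - 1),
    show Icc 2 t = (Icc 1 (t - 1)).map (addRightEmbedding 1) by ext; simp; omega, sum_map]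
  simp [mul_comm]

variable {t a}

theorem exists_hpEntry_eq_some_iff {x : Finset (Fin t) × ℕ} :
    (∃ r j, HpEntry t a r j = some x) ↔ x ∈ hpSymbols t a := by
  obtain ⟨X, i⟩ := x
  simp only [hpEntry_eq_some_iff, mem_hpSymbols, mem_Icc]
  constructor
  · rintro ⟨⟨⟨Y, hY₁, hY₂⟩, k⟩, j, hj, rfl, rfl⟩
    simp only [card_insert_of_notMem hj, Nat.add_sub_cancel]
    exact ⟨by omega, k.isLt⟩
  · rintro ⟨⟨hX₂, hXt⟩, hi⟩
    obtain ⟨j, hj⟩ := card_pos.mp (by omega : 0 < #X)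
    have hcard : #(X.erase j) = #X - 1 := card_erase_of_mem hj
    exact ⟨⟨⟨X.erase j, by omega, by omega⟩, ⟨i, hcard ▸ hi⟩⟩, j, notMem_erase j X,
      insert_erase hj, rfl⟩

variable (t a)

theorem image_hpEntry_erase_none :
    (univ.image fun p : HpRow t a × Fin t => HpEntry t a p.1 p.2).erase none
      = (hpSymbols t a).map Function.Embedding.some := by
  ext (_ | x)
  · simp
  · simp [← exists_hpEntry_eq_some_iff]

end Symbols

section Crossing

variable {t : ℕ} {a : ℕ → ℕ}

theorem HpRow.ext {r₁ r₂ : HpRow t a} (hY : r₁.1.1 = r₂.1.1) (hi : (r₁.2 : ℕ) = r₂.2) :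
    r₁ = r₂ := by
  obtain ⟨⟨Y, hY₁⟩, i⟩ := r₁
  obtain ⟨⟨Y, hY₂⟩, k⟩ := r₂
  subst hY
  obtain rfl : i = k := Fin.ext hi
  rfl

theorem mem_of_hpEntry_eq_some {r₁ r₂ : HpRow t a} {j₁ j₂ : Fin t} {x : Finset (Fin t) × ℕ}
    (h₁ : HpEntry t a r₁ j₁ = some x) (h₂ : HpEntry t a r₂ j₂ = some x) (hj : j₁ ≠ j₂) :
    j₂ ∈ r₁.1.1 := by
  rw [hpEntry_eq_some_iff] at h₁ h₂
  have : j₂ ∈ insert j₁ r₁.1.1 := h₁.2.1 ▸ h₂.2.1 ▸ mem_insert_self j₂ r₂.1.1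
  exact (mem_insert.mp this).resolve_left hj.symm

theorem eq_of_hpEntry_eq_some {r₁ r₂ : HpRow t a} {j : Fin t} {x : Finset (Fin t) × ℕ}
    (h₁ : HpEntry t a r₁ j = some x) (h₂ : HpEntry t a r₂ j = some x) : r₁ = r₂ := by
  rw [hpEntry_eq_some_iff] at h₁ h₂
  refine HpRow.ext ?_ (h₁.2.2.trans h₂.2.2.symm)
  rw [← erase_insert h₁.1, ← erase_insert h₂.1, h₁.2.1, h₂.2.1]

theorem crossing_stars_of_hpEntry_eq {r₁ r₂ : HpRow t a} {j₁ j₂ : Fin t}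
    (h : HpEntry t a r₁ j₁ = HpEntry t a r₂ j₂) (hne : HpEntry t a r₁ j₁ ≠ none)
    (hcell : (r₁, j₁) ≠ (r₂, j₂)) :
    r₁ ≠ r₂ ∧ j₁ ≠ j₂ ∧ HpEntry t a r₁ j₂ = none ∧ HpEntry t a r₂ j₁ = none := by
  obtain ⟨x, h₁⟩ := Option.ne_none_iff_exists'.mp hne
  have h₂ : HpEntry t a r₂ j₂ = some x := h ▸ h₁
  have hj : j₁ ≠ j₂ := by
    rintro rfl
    exact hcell (by rw [eq_of_hpEntry_eq_some h₁ h₂])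
  have hj₁ : j₁ ∈ r₂.1.1 := mem_of_hpEntry_eq_some h₂ h₁ hj.symm
  refine ⟨?_, hj, hpEntry_eq_none_iff.mpr (mem_of_hpEntry_eq_some h₁ h₂ hj),
    hpEntry_eq_none_iff.mpr hj₁⟩
  rintro rfl
  exact hne (hpEntry_eq_none_iff.mpr hj₁)

end Crossing

theorem t_design_B_is_PDA_general (t : ℕ) (a : ℕ → ℕ) :
    Fintype.card (HpRow t a) = ∑ s ∈ Finset.Icc 1 (t - 1), a s * Nat.choose t s ∧
    (∀ j : Fin t,
      (Finset.univ.filter (fun r : HpRow t a => HpEntry t a r j = none)).card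
        = ∑ s ∈ Finset.Icc 1 (t - 1), a s * Nat.choose (t - 1) (s - 1)) ∧
    (((Finset.univ : Finset (HpRow t a × Fin t)).image
        (fun p => HpEntry t a p.1 p.2)).erase none).card
      = ∑ s ∈ Finset.Icc 1 (t - 1), a s * Nat.choose t (s + 1) ∧
    (∀ (r₁ r₂ : HpRow t a) (j₁ j₂ : Fin t),
      HpEntry t a r₁ j₁ = HpEntry t a r₂ j₂ → HpEntry t a r₁ j₁ ≠ none →
      (r₁, j₁) ≠ (r₂, j₂) →
      r₁ ≠ r₂ ∧ j₁ ≠ j₂ ∧ HpEntry t a r₁ j₂ = none ∧ HpEntry t a r₂ j₁ = none) := by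
  refine ⟨card_hpRow t a, card_filter_hpEntry_eq_none t a, ?_,
    fun _ _ _ _ => crossing_stars_of_hpEntry_eq⟩
  rw [image_hpEntry_erase_none, card_map, card_hpSymbols]

/-- The array `B` from the construction is a valid `[t, F', Z', S]`-PDA with
`F' = Σ a_s·C(t,s)`, `Z' = Σ a_s·C(t−1,s−1)`, `S = Σ a_s·C(t,s+1)`:
it has `F'` rows, each column contains exactly `Z'` stars, exactly `S` distinct
non-star symbols occur, and any two equal non-star entries lie in distinct rows and
columns with stars at the two crossing positions. -/
theorem t_design_B_is_PDA (t : ℕ) (ht : 2 ≤ t) (a : ℕ → ℕ) :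
    Fintype.card (HpRow t a) = ∑ s ∈ Finset.Icc 1 (t - 1), a s * Nat.choose t s ∧
    (∀ j : Fin t,
      (Finset.univ.filter (fun r : HpRow t a => HpEntry t a r j = none)).card
        = ∑ s ∈ Finset.Icc 1 (t - 1), a s * Nat.choose (t - 1) (s - 1)) ∧
    (((Finset.univ : Finset (HpRow t a × Fin t)).image
        (fun p => HpEntry t a p.1 p.2)).erase none).card
      = ∑ s ∈ Finset.Icc 1 (t - 1), a s * Nat.choose t (s + 1) ∧
    (∀ (r₁ r₂ : HpRow t a) (j₁ j₂ : Fin t),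
      HpEntry t a r₁ j₁ = HpEntry t a r₂ j₂ → HpEntry t a r₁ j₁ ≠ none →
      (r₁, j₁) ≠ (r₂, j₂) →
      r₁ ≠ r₂ ∧ j₁ ≠ j₂ ∧ HpEntry t a r₁ j₂ = none ∧ HpEntry t a r₂ j₁ = none) :=
  t_design_B_is_PDA_general t a
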